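/- Let n ≥ 1, let A and B be Hermitian n×n complex matrices all of whose eigenvalues lie in the open interval (−1,1), let f, g ∈ 𝔥, and let X be an arbitrary n×n complex matrix. Then for every unitarily invariant norm N on the n×n complex matrices, N(f(A)X + f(A)Xg(B) + Xg(B)) ≤ (√2/(d_A d_B)) · ( N(|AXB| + |X|) + N(|XB| + |X|) + N(|AX| + |X|) ). -/

import Mathlib

open Matrix
open scoped ComplexOrder

/-- `f(A)` for a Hermitian matrix `A`, defined via the spectral decomposition:
`f(A) = U diag(f(λ₁),…,f(λₙ)) U*`. -/
noncomputable def herFun {n : ℕ} {A : Matrix (Fin n) (Fin n) ℂ} (hA : A.IsHermitian)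
    (f : ℂ → ℂ) : Matrix (Fin n) (Fin n) ℂ :=
  (hA.eigenvectorUnitary : Matrix (Fin n) (Fin n) ℂ) *
    Matrix.diagonal (fun i => f (hA.eigenvalues i : ℂ)) *
    star (hA.eigenvectorUnitary : Matrix (Fin n) (Fin n) ℂ)

/-- `|X| = (X*X)^{1/2}`, the positive semidefinite absolute value of a matrix. -/
noncomputable def matAbs {n : ℕ} (X : Matrix (Fin n) (Fin n) ℂ) : Matrix (Fin n) (Fin n) ℂ :=
  ((Matrix.posSemidef_conjTranspose_mul_self X).1.eigenvectorUnitary : Matrix (Fin n) (Fin n) ℂ) *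
    Matrix.diagonal ((↑) ∘ (Real.sqrt ·) ∘ (Matrix.posSemidef_conjTranspose_mul_self X).1.eigenvalues) *
    (star (Matrix.posSemidef_conjTranspose_mul_self X).1.eigenvectorUnitary : Matrix (Fin n) (Fin n) ℂ)

/-- `d_A = min { 1 - |λⱼ| }`, the distance from the unit circle to the spectrum of a
Hermitian matrix `A` whose eigenvalues lie in `(-1,1)`. -/
noncomputable def dDist {n : ℕ} {A : Matrix (Fin n) (Fin n) ℂ} (hA : A.IsHermitian) : ℝ :=
  ⨅ i, (1 - |hA.eigenvalues i|)

/-- Membership in the class `𝔥`: analytic on the open unit disk, positive real part there,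
and value `1` at the origin. -/
def MemH (f : ℂ → ℂ) : Prop :=
  DifferentiableOn ℂ f (Metric.ball (0 : ℂ) 1) ∧
    (∀ z ∈ Metric.ball (0 : ℂ) 1, 0 < (f z).re) ∧ f 0 = 1

/-- A function `N` on `n × n` complex matrices is a unitarily invariant norm. -/
def IsUnitarilyInvariantNorm {m : Type*} [Fintype m] [DecidableEq m]
    (N : Matrix m m ℂ → ℝ) : Prop :=
  (∀ X, N X = 0 ↔ X = 0) ∧
    (∀ (c : ℂ) X, N (c • X) = ‖c‖ * N X) ∧
    (∀ X Y, N (X + Y) ≤ N X + N Y) ∧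
    (∀ (U V : Matrix.unitaryGroup m ℂ) (X : Matrix m m ℂ),
      N ((U : Matrix m m ℂ) * X * (V : Matrix m m ℂ)) = N X)

/-! For `f ∈ 𝔥` the Cayley transform `(f - 1)/(f + 1)` maps the disk into itself and fixes `0`,
so by Schwarz's lemma `‖f x‖ ≤ (1 + |x|)/(1 - |x|) ≤ 2/d_A - 1` on the spectrum of `A`.
A diagonal matrix with entries of modulus `≤ 1` is the average of two unitary diagonal matrices,
so multiplying by `f(A)` (resp. `g(B)`) scales a unitarily invariant norm by at most `2/d_A - 1`
(resp. `2/d_B - 1`), and the left side is at most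
`(4/(d_A d_B) - 1) N(X) ≤ (√2/(d_A d_B)) · 3 N(X)`.
Finally `N(X) = N(|X|) ≤ N(|Z| + |X|)` for every `Z`, by polar decomposition and monotonicity of `N`
on positive semidefinite matrices: if `0 ≤ Q ≤ R` with `R` invertible, then `Q = K R Kᴴ` for the
contraction `K = Q^{1/2} R^{-1/2}`, which is again an average of two unitaries. -/

open Complex in
lemma Complex.exists_unimodular_midpoint_eq (z : ℂ) (hz : ‖z‖ ≤ 1) :
    ∃ u w : ℂ, ‖u‖ = 1 ∧ ‖w‖ = 1 ∧ z = 2⁻¹ * (u + w) := by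
  set φ := Real.arccos ‖z‖
  refine ⟨exp (↑(arg z + φ) * I), exp (↑(arg z - φ) * I), norm_exp_ofReal_mul_I _,
    norm_exp_ofReal_mul_I _, ?_⟩
  have hcos : cos (φ : ℂ) = ‖z‖ := by
    rw [← ofReal_cos, Real.cos_arccos (by linarith [norm_nonneg z]) hz]
  calc z = cos φ * exp (arg z * I) := by rw [hcos, norm_mul_exp_arg_mul_I]
    _ = 2⁻¹ * (exp (↑(arg z + φ) * I) + exp (↑(arg z - φ) * I)) := by
      rw [cos, ofReal_add, ofReal_sub, add_mul, sub_mul, exp_add, exp_sub, neg_mul, exp_neg]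
      field_simp

lemma Complex.norm_sub_one_lt_norm_add_one {w : ℂ} (hw : 0 < w.re) : ‖w - 1‖ < ‖w + 1‖ := by
  refine lt_of_pow_lt_pow_left₀ 2 (norm_nonneg _) ?_
  simp only [Complex.sq_norm, Complex.normSq_apply, Complex.sub_re, Complex.add_re,
    Complex.sub_im, Complex.add_im, Complex.one_re, Complex.one_im]
  nlinarith

lemma Complex.norm_one_add_div_one_sub_le {w : ℂ} (hw : ‖w‖ < 1) :
    ‖(1 + w) / (1 - w)‖ ≤ (1 + ‖w‖) / (1 - ‖w‖) := by
  rw [norm_div]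
  refine div_le_div₀ (by positivity) ?_ (by linarith) ?_
  · simpa using norm_add_le 1 w
  · simpa using norm_sub_norm_le 1 w

lemma MemH.norm_le {f : ℂ → ℂ} (hf : MemH f) {z : ℂ} (hz : ‖z‖ < 1) :
    ‖f z‖ ≤ (1 + ‖z‖) / (1 - ‖z‖) := by
  obtain ⟨hd, hre, h0⟩ := hf
  have hne (w : ℂ) (hw : w ∈ Metric.ball (0 : ℂ) 1) : f w + 1 ≠ 0 := fun h => by
    have := Complex.norm_sub_one_lt_norm_add_one (hre w hw)
    rw [h, norm_zero] at this
    exact (norm_nonneg _).not_gt this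
  set ω : ℂ → ℂ := fun w => (f w - 1) / (f w + 1)
  have hmaps : Set.MapsTo ω (Metric.ball 0 1) (Metric.closedBall 0 1) := fun w hw => by
    rw [Metric.mem_closedBall, dist_zero_right, norm_div]
    exact div_le_one_of_le₀ (Complex.norm_sub_one_lt_norm_add_one (hre w hw)).le (norm_nonneg _)
  have hω : ‖ω z‖ ≤ ‖z‖ :=
    Complex.norm_le_norm_of_mapsTo_ball ((hd.sub_const 1).div (hd.add_const 1) hne) hmaps
      (by simp [ω, h0]) hz
  have hfz : f z = (1 + ω z) / (1 - ω z) := by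
    have := hne z (by simpa using hz)
    simp only [ω]
    field_simp
    ring
  calc ‖f z‖ ≤ (1 + ‖ω z‖) / (1 - ‖ω z‖) :=
        hfz ▸ Complex.norm_one_add_div_one_sub_le (hω.trans_lt hz)
    _ ≤ (1 + ‖z‖) / (1 - ‖z‖) := by gcongr

section UnitaryMidpoint

variable {m : Type*} [Fintype m] [DecidableEq m]

lemma diagonal_mem_unitaryGroup {u : m → ℂ} (hu : ∀ i, ‖u i‖ = 1) :
    diagonal u ∈ unitaryGroup m ℂ := by
  rw [mem_unitaryGroup_iff, star_eq_conjTranspose, diagonal_conjTranspose, diagonal_mul_diagonal]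
  convert diagonal_one with i
  rw [Pi.star_apply, RCLike.star_def, Complex.mul_conj', hu i]
  norm_num

def IsUnitaryMidpoint (K : Matrix m m ℂ) : Prop :=
  ∃ U V : unitaryGroup m ℂ, K = (2⁻¹ : ℂ) • ((U : Matrix m m ℂ) + V)

lemma isUnitaryMidpoint_diagonal {e : m → ℂ} (he : ∀ i, ‖e i‖ ≤ 1) :
    IsUnitaryMidpoint (diagonal e) := by
  choose u w hu hw he using fun i => Complex.exists_unimodular_midpoint_eq (e i) (he i)
  refine ⟨⟨_, diagonal_mem_unitaryGroup hu⟩, ⟨_, diagonal_mem_unitaryGroup hw⟩, ?_⟩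
  rw [diagonal_add, ← diagonal_smul]
  exact congrArg diagonal (funext he)

lemma IsUnitaryMidpoint.unitary_mul_mul {K : Matrix m m ℂ} (hK : IsUnitaryMidpoint K)
    (U V : unitaryGroup m ℂ) : IsUnitaryMidpoint ((U : Matrix m m ℂ) * K * (V : Matrix m m ℂ)) := by
  obtain ⟨U₁, U₂, rfl⟩ := hK
  refine ⟨U * U₁ * V, U * U₂ * V, ?_⟩
  simp only [Submonoid.coe_mul, Matrix.mul_smul, Matrix.smul_mul, Matrix.mul_add, Matrix.add_mul]

lemma IsUnitaryMidpoint.conjTranspose {K : Matrix m m ℂ} (hK : IsUnitaryMidpoint K) :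
    IsUnitaryMidpoint Kᴴ := by
  obtain ⟨U₁, U₂, rfl⟩ := hK
  refine ⟨star U₁, star U₂, ?_⟩
  simp [← star_eq_conjTranspose]

end UnitaryMidpoint

namespace IsUnitarilyInvariantNorm

variable {m : Type*} [Fintype m] [DecidableEq m] {N : Matrix m m ℂ → ℝ}
  (hN : IsUnitarilyInvariantNorm N)
include hN

lemma map_smul (c : ℂ) (X : Matrix m m ℂ) : N (c • X) = ‖c‖ * N X := hN.2.1 c X

lemma add_le (X Y : Matrix m m ℂ) : N (X + Y) ≤ N X + N Y := hN.2.2.1 X Y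

lemma unitary_mul (U : unitaryGroup m ℂ) (X : Matrix m m ℂ) :
    N ((U : Matrix m m ℂ) * X) = N X := by
  simpa using hN.2.2.2 U 1 X

lemma mul_unitary (U : unitaryGroup m ℂ) (X : Matrix m m ℂ) : N (X * U) = N X := by
  simpa using hN.2.2.2 1 U X

lemma nonneg (X : Matrix m m ℂ) : 0 ≤ N X := by
  have h := hN.add_le X (-X)
  rw [add_neg_cancel, (hN.1 0).2 rfl, ← neg_one_smul ℂ X, hN.map_smul] at h
  norm_num at h
  linarith

lemma midpoint_mul_le {K : Matrix m m ℂ} (hK : IsUnitaryMidpoint K) (X : Matrix m m ℂ) :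
    N (K * X) ≤ N X := by
  obtain ⟨U, V, rfl⟩ := hK
  rw [Matrix.smul_mul, Matrix.add_mul, hN.map_smul]
  have := hN.add_le (U * X) (V * X)
  rw [hN.unitary_mul, hN.unitary_mul] at this
  norm_num
  linarith

lemma mul_midpoint_le {K : Matrix m m ℂ} (hK : IsUnitaryMidpoint K) (X : Matrix m m ℂ) :
    N (X * K) ≤ N X := by
  obtain ⟨U, V, rfl⟩ := hK
  rw [Matrix.mul_smul, Matrix.mul_add, hN.map_smul]
  have := hN.add_le (X * U) (X * V)
  rw [hN.mul_unitary, hN.mul_unitary] at this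
  norm_num
  linarith

end IsUnitarilyInvariantNorm

section Factorizations

variable {m : Type*} [Fintype m] [DecidableEq m]

lemma exists_unitary_mul_diagonal_sqrt {Y : Matrix m m ℂ} {μ : m → ℝ}
    (hY : Yᴴ * Y = diagonal fun i => (μ i : ℂ)) :
    ∃ U : unitaryGroup m ℂ, Y = (U : Matrix m m ℂ) * diagonal fun i => (√(μ i) : ℂ) := by
  -- The columns `c i` of `Y` are orthogonal with `‖c i‖ = √(μ i)`; the columns of `U` are the
  -- normalized nonzero ones, extended to an orthonormal basis.
  set c : m → EuclideanSpace ℂ m := fun i => WithLp.toLp 2 fun j => Y j i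
  have hinner (i k : m) : inner ℂ (c i) (c k) = (Yᴴ * Y) i k := by
    simp only [c, PiLp.inner_apply, RCLike.inner_apply, mul_apply, conjTranspose_apply]
    exact Finset.sum_congr rfl fun _ _ => mul_comm _ _
  have hnorm (i : m) : ‖c i‖ = √(μ i) := by
    have h := hinner i i
    rw [inner_self_eq_norm_sq_to_K, hY, diagonal_apply_eq] at h
    rw [← Real.sqrt_sq (norm_nonneg (c i))]
    exact congrArg _ (Complex.ofReal_injective (by push_cast; exact h))
  set v : m → EuclideanSpace ℂ m := fun i => (‖c i‖⁻¹ : ℂ) • c i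
  have hv : Orthonormal ℂ ({i | c i ≠ 0}.domRestrict v) := by
    rw [orthonormal_iff_ite]
    rintro ⟨i, hi⟩ ⟨k, hk⟩
    simp only [Set.domRestrict_apply, v, inner_smul_left, inner_smul_right, Subtype.mk.injEq]
    split_ifs with hik
    · subst hik
      have : (‖c i‖ : ℂ) ≠ 0 := by simpa using hi
      rw [inner_self_eq_norm_sq_to_K, Complex.conj_inv, Complex.conj_ofReal]
      simp [this, sq]
    · rw [hinner, hY, diagonal_apply_ne _ hik, mul_zero, mul_zero]
  obtain ⟨b, hb⟩ := hv.exists_orthonormalBasis_extension_of_card_eq (by simp)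
  refine ⟨⟨_, (EuclideanSpace.basisFun m ℂ).toMatrix_orthonormalBasis_mem_unitary b⟩, ?_⟩
  ext j i
  rw [mul_diagonal, ← hnorm]
  by_cases hi : c i = 0
  · have hY0 : Y j i = 0 := congrArg (· j) hi
    simp [hi, hY0]
  · have hc : (‖c i‖ : ℂ) ≠ 0 := by simpa using hi
    change Y j i = b i j * ‖c i‖
    rw [hb i hi]
    change Y j i = (‖c i‖⁻¹ : ℂ) * Y j i * ‖c i‖
    field_simp

lemma Matrix.IsHermitian.star_eigenvectorUnitary_mul_mul_eigenvectorUnitary {A : Matrix m m ℂ}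
    (hA : A.IsHermitian) :
    star (hA.eigenvectorUnitary : Matrix m m ℂ) * A * hA.eigenvectorUnitary =
      diagonal fun i => (hA.eigenvalues i : ℂ) :=
  (Unitary.conjStarAlgAut_star_apply (S := ℂ) _ _).symm.trans
    hA.conjStarAlgAut_star_eigenvectorUnitary

open scoped MatrixOrder in
lemma exists_contraction_eq_mul_mul_conjTranspose {Q R : Matrix m m ℂ} (hQ : Q.PosSemidef)
    (hR : R.PosDef) (hQR : (R - Q).PosSemidef) :
    ∃ K : Matrix m m ℂ, (1 - Kᴴ * K).PosSemidef ∧ Q = K * R * Kᴴ := by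
  set S := CFC.sqrt R
  have hSS : S * S = R := CFC.sqrt_mul_sqrt_self R hR.posSemidef.nonneg
  have hSH : Sᴴ = S := (CFC.sqrt_nonneg R).posSemidef.isHermitian
  have hS : IsUnit S.det := (isUnit_iff_isUnit_det S).1
    ((CFC.isUnit_sqrt_iff R hR.posSemidef.nonneg).2 hR.isUnit)
  set T := S⁻¹
  have hST : S * T = 1 := mul_nonsing_inv S hS
  have hTS : T * S = 1 := nonsing_inv_mul S hS
  have hTH : Tᴴ = T := by rw [conjTranspose_nonsing_inv, hSH]
  set B := CFC.sqrt Q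
  have hBB : B * B = Q := CFC.sqrt_mul_sqrt_self Q hQ.nonneg
  have hBH : Bᴴ = B := (CFC.sqrt_nonneg Q).posSemidef.isHermitian
  refine ⟨B * T, ?_, ?_⟩
  · convert hQR.conjTranspose_mul_mul_same T using 1
    rw [conjTranspose_mul, hTH, hBH, Matrix.mul_sub, Matrix.sub_mul, ← hSS, ← hBB]
    simp only [Matrix.mul_assoc]
    rw [hST, Matrix.mul_one, hTS]
  · rw [conjTranspose_mul, hTH, hBH, ← hSS]
    simp only [Matrix.mul_assoc]
    rw [← Matrix.mul_assoc S T, hST, Matrix.one_mul, ← Matrix.mul_assoc T S, hTS, Matrix.one_mul,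
      hBB]

end Factorizations

section SquareMatrices

variable {n : ℕ}

lemma exists_unitary_eq_mul_matAbs (K : Matrix (Fin n) (Fin n) ℂ) :
    ∃ W : unitaryGroup (Fin n) ℂ, K = W * matAbs K := by
  let hH := (posSemidef_conjTranspose_mul_self K).1
  let V : Matrix (Fin n) (Fin n) ℂ := hH.eigenvectorUnitary
  have hKV : (K * V)ᴴ * (K * V) = diagonal fun i => (hH.eigenvalues i : ℂ) := by
    rw [← hH.star_eigenvectorUnitary_mul_mul_eigenvectorUnitary, conjTranspose_mul,
      star_eq_conjTranspose]
    simp only [Matrix.mul_assoc]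
    rfl
  obtain ⟨U, hU⟩ := exists_unitary_mul_diagonal_sqrt hKV
  refine ⟨U * star hH.eigenvectorUnitary, ?_⟩
  calc K = K * V * star V := by
        rw [Matrix.mul_assoc, mem_unitaryGroup_iff.mp hH.eigenvectorUnitary.2, Matrix.mul_one]
    _ = U * star V * (V * (diagonal fun i => (√(hH.eigenvalues i) : ℂ)) * star V) := by
      rw [hU]
      simp only [Matrix.mul_assoc]
      rw [← Matrix.mul_assoc (star V), mem_unitaryGroup_iff'.mp hH.eigenvectorUnitary.2,
        Matrix.one_mul]
    _ = _ := rfl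

lemma matAbs_posSemidef (K : Matrix (Fin n) (Fin n) ℂ) : (matAbs K).PosSemidef := by
  rw [matAbs, star_eq_conjTranspose]
  refine PosSemidef.mul_mul_conjTranspose_same (posSemidef_diagonal_iff.2 fun i => ?_) _
  simp [Real.sqrt_nonneg]

lemma isUnitaryMidpoint_of_posSemidef_one_sub {K : Matrix (Fin n) (Fin n) ℂ}
    (hK : (1 - Kᴴ * K).PosSemidef) : IsUnitaryMidpoint K := by
  obtain ⟨W, hW⟩ := exists_unitary_eq_mul_matAbs K
  let hH := (posSemidef_conjTranspose_mul_self K).1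
  let V : unitaryGroup (Fin n) ℂ := hH.eigenvectorUnitary
  have hμ (i : Fin n) : hH.eigenvalues i ≤ 1 := by
    have h := hK.conjTranspose_mul_mul_same (V : Matrix (Fin n) (Fin n) ℂ)
    rw [Matrix.mul_sub, Matrix.sub_mul, Matrix.mul_one, ← star_eq_conjTranspose,
      mem_unitaryGroup_iff'.mp V.2, hH.star_eigenvectorUnitary_mul_mul_eigenvectorUnitary,
      ← diagonal_one, diagonal_sub, posSemidef_diagonal_iff] at h
    exact_mod_cast sub_nonneg.1 (h i)
  have hD : IsUnitaryMidpoint (diagonal fun i => (√(hH.eigenvalues i) : ℂ)) :=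
    isUnitaryMidpoint_diagonal fun i => by
      rw [Complex.norm_real, Real.norm_of_nonneg (Real.sqrt_nonneg _)]
      exact Real.sqrt_le_one.2 (hμ i)
  rw [hW, matAbs, ← Matrix.mul_assoc, ← Matrix.mul_assoc]
  exact hD.unitary_mul_mul (W * V) (star V)

variable {A : Matrix (Fin n) (Fin n) ℂ} (hA : A.IsHermitian)

lemma isUnitaryMidpoint_smul_herFun {f : ℂ → ℂ} {c : ℝ} (hc : 0 < c)
    (hf : ∀ i, ‖f (hA.eigenvalues i)‖ ≤ c) : IsUnitaryMidpoint ((c⁻¹ : ℂ) • herFun hA f) := by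
  rw [herFun, ← Matrix.smul_mul, ← Matrix.mul_smul, ← diagonal_smul]
  refine (isUnitaryMidpoint_diagonal fun i => ?_).unitary_mul_mul _ (star hA.eigenvectorUnitary)
  rw [Pi.smul_apply, smul_eq_mul, norm_mul, norm_inv, Complex.norm_real,
    Real.norm_of_nonneg hc.le, inv_mul_le_one₀ hc]
  exact hf i

lemma dDist_le (i : Fin n) : dDist hA ≤ 1 - |hA.eigenvalues i| :=
  ciInf_le (Set.finite_range _).bddBelow i

lemma dDist_pos [Nonempty (Fin n)] (hspec : ∀ i, |hA.eigenvalues i| < 1) : 0 < dDist hA := by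
  obtain ⟨i, hi⟩ := exists_eq_ciInf_of_finite (f := fun i => 1 - |hA.eigenvalues i|)
  rw [dDist, ← hi]
  linarith [hspec i]

lemma one_lt_two_div_dDist [Nonempty (Fin n)] (hspec : ∀ i, |hA.eigenvalues i| < 1) :
    1 < 2 / dDist hA := by
  have i : Fin n := Classical.arbitrary _
  rw [lt_div_iff₀ (dDist_pos hA hspec)]
  linarith [dDist_le hA i, abs_nonneg (hA.eigenvalues i)]

lemma MemH.norm_apply_eigenvalue_le {f : ℂ → ℂ} (hf : MemH f)
    (hspec : ∀ i, |hA.eigenvalues i| < 1) (i : Fin n) :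
    ‖f (hA.eigenvalues i)‖ ≤ 2 / dDist hA - 1 := by
  have : Nonempty (Fin n) := ⟨i⟩
  have h := hf.norm_le (z := hA.eigenvalues i) (by simpa using hspec i)
  rw [Complex.norm_real, Real.norm_eq_abs] at h
  set t := |hA.eigenvalues i|
  have ht : 1 - t ≠ 0 := (sub_pos.2 (hspec i)).ne'
  calc ‖f (hA.eigenvalues i)‖ ≤ 2 / (1 - t) - 1 := by
        convert h using 1
        field_simp
        ring
    _ ≤ 2 / dDist hA - 1 := by
        gcongr
        · exact dDist_pos hA hspec
        · exact dDist_le hA i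

end SquareMatrices

namespace IsUnitarilyInvariantNorm

variable {n : ℕ} {N : Matrix (Fin n) (Fin n) ℂ → ℝ} (hN : IsUnitarilyInvariantNorm N)
include hN

lemma map_matAbs (K : Matrix (Fin n) (Fin n) ℂ) : N (matAbs K) = N K := by
  obtain ⟨W, hW⟩ := exists_unitary_eq_mul_matAbs K
  conv_rhs => rw [hW]
  exact (hN.unitary_mul W _).symm

lemma le_of_posSemidef_sub {Q R : Matrix (Fin n) (Fin n) ℂ} (hQ : Q.PosSemidef) (hR : R.PosDef)
    (hQR : (R - Q).PosSemidef) : N Q ≤ N R := by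
  obtain ⟨K, hK, rfl⟩ := exists_contraction_eq_mul_mul_conjTranspose hQ hR hQR
  have hK' := isUnitaryMidpoint_of_posSemidef_one_sub hK
  calc N (K * R * Kᴴ) ≤ N (K * R) := hN.mul_midpoint_le hK'.conjTranspose _
    _ ≤ N R := hN.midpoint_mul_le hK' R

lemma le_add_of_posSemidef {P Q : Matrix (Fin n) (Fin n) ℂ} (hP : P.PosSemidef)
    (hQ : Q.PosSemidef) : N Q ≤ N (P + Q) := by
  have hε (ε : ℝ) (hε : 0 < ε) : N Q ≤ N (P + Q) + ε * N 1 := by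
    have hε1 : ((ε : ℂ) • 1 : Matrix (Fin n) (Fin n) ℂ).PosDef :=
      PosDef.one.smul (by exact_mod_cast hε)
    calc N Q ≤ N (P + Q + (ε : ℂ) • 1) := by
          refine hN.le_of_posSemidef_sub hQ (PosDef.posSemidef_add (hP.add hQ) hε1) ?_
          rw [add_right_comm, add_sub_cancel_right]
          exact hP.add hε1.posSemidef
      _ ≤ N (P + Q) + N ((ε : ℂ) • 1) := hN.add_le _ _
      _ = N (P + Q) + ε * N 1 := by
          rw [hN.map_smul, Complex.norm_real, Real.norm_of_nonneg hε.le]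
  refine le_of_forall_pos_le_add fun δ hδ => ?_
  have h1 := hN.nonneg 1
  calc N Q ≤ N (P + Q) + δ / (N 1 + 1) * N 1 := hε _ (by positivity)
    _ ≤ N (P + Q) + δ := by
      gcongr
      rw [div_mul_eq_mul_div, div_le_iff₀ (by positivity)]
      nlinarith

variable {A B : Matrix (Fin n) (Fin n) ℂ} (hA : A.IsHermitian) (hB : B.IsHermitian)
  {f g : ℂ → ℂ} {a b : ℝ}

lemma herFun_mul_le (ha : 0 < a) (hf : ∀ i, ‖f (hA.eigenvalues i)‖ ≤ a)
    (X : Matrix (Fin n) (Fin n) ℂ) : N (herFun hA f * X) ≤ a * N X := by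
  have h := hN.midpoint_mul_le (isUnitaryMidpoint_smul_herFun hA ha hf) X
  rwa [Matrix.smul_mul, hN.map_smul, norm_inv, Complex.norm_real, Real.norm_of_nonneg ha.le,
    inv_mul_le_iff₀ ha] at h

lemma mul_herFun_le (ha : 0 < a) (hf : ∀ i, ‖f (hA.eigenvalues i)‖ ≤ a)
    (X : Matrix (Fin n) (Fin n) ℂ) : N (X * herFun hA f) ≤ a * N X := by
  have h := hN.mul_midpoint_le (isUnitaryMidpoint_smul_herFun hA ha hf) X
  rwa [Matrix.mul_smul, hN.map_smul, norm_inv, Complex.norm_real, Real.norm_of_nonneg ha.le,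
    inv_mul_le_iff₀ ha] at h

lemma herFun_mul_add_le (ha : 0 < a) (hb : 0 < b) (hf : ∀ i, ‖f (hA.eigenvalues i)‖ ≤ a)
    (hg : ∀ i, ‖g (hB.eigenvalues i)‖ ≤ b) (X : Matrix (Fin n) (Fin n) ℂ) :
    N (herFun hA f * X + herFun hA f * X * herFun hB g + X * herFun hB g) ≤
      ((1 + a) * (1 + b) - 1) * N X := by
  have hfX := hN.herFun_mul_le hA ha hf X
  have hfXg := (hN.mul_herFun_le hB hb hg (herFun hA f * X)).trans
    (mul_le_mul_of_nonneg_left hfX hb.le)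
  have hXg := hN.mul_herFun_le hB hb hg X
  have hsum := (hN.add_le (herFun hA f * X + herFun hA f * X * herFun hB g) (X * herFun hB g)).trans
    (add_le_add (hN.add_le _ _) le_rfl)
  linarith

end IsUnitarilyInvariantNorm

/-- **Proposition 3.2 (first inequality), Hermitian matrix case.** -/
theorem stmt11 {n : ℕ} (hn : 1 ≤ n)
    {A B : Matrix (Fin n) (Fin n) ℂ} (hA : A.IsHermitian) (hB : B.IsHermitian)
    (hAspec : ∀ i, |hA.eigenvalues i| < 1) (hBspec : ∀ i, |hB.eigenvalues i| < 1)
    {f g : ℂ → ℂ} (hf : MemH f) (hg : MemH g)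
    (X : Matrix (Fin n) (Fin n) ℂ)
    (N : Matrix (Fin n) (Fin n) ℂ → ℝ) (hN : IsUnitarilyInvariantNorm N) :
    N (herFun hA f * X + herFun hA f * X * herFun hB g + X * herFun hB g) ≤
      (Real.sqrt 2 / (dDist hA * dDist hB)) *
        (N (matAbs (A * X * B) + matAbs X) + N (matAbs (X * B) + matAbs X) +
          N (matAbs (A * X) + matAbs X)) := by
  have : Nonempty (Fin n) := Fin.pos_iff_nonempty.mp hn
  have hd := mul_pos (dDist_pos hA hAspec) (dDist_pos hB hBspec)
  have hX (Z : Matrix (Fin n) (Fin n) ℂ) : N X ≤ N (matAbs Z + matAbs X) :=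
    hN.map_matAbs X ▸ hN.le_add_of_posSemidef (matAbs_posSemidef Z) (matAbs_posSemidef X)
  have h4 : 2 / dDist hA * (2 / dDist hB) ≤ √2 / (dDist hA * dDist hB) * 3 := by
    rw [div_mul_div_comm, div_mul_eq_mul_div, div_le_div_iff_of_pos_right hd]
    nlinarith [Real.sq_sqrt (zero_le_two (α := ℝ)), Real.sqrt_nonneg 2]
  calc _ ≤ ((1 + (2 / dDist hA - 1)) * (1 + (2 / dDist hB - 1)) - 1) * N X :=
        hN.herFun_mul_add_le hA hB (sub_pos.2 (one_lt_two_div_dDist hA hAspec))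
          (sub_pos.2 (one_lt_two_div_dDist hB hBspec)) (hf.norm_apply_eigenvalue_le hA hAspec)
          (hg.norm_apply_eigenvalue_le hB hBspec) X
    _ ≤ √2 / (dDist hA * dDist hB) * (3 * N X) := by
        rw [add_sub_cancel, add_sub_cancel]
        nlinarith [hN.nonneg X]
    _ ≤ _ := by
        refine mul_le_mul_of_nonneg_left ?_ (div_nonneg (Real.sqrt_nonneg 2) hd.le)
        linarith [hX (A * X * B), hX (X * B), hX (A * X)]
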